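/- Let ε: L^(2) → 2^N be a Fitch map with unique least-resolved tree (T_ε, λ_ε). Then a rooted phylogenetic tree T with leaf set L admits an edge labeling λ: E(T) → 2^N such that (T,λ) explains ε if and only if T is a refinement of T_ε. -/
import Mathlib


/-- A rooted phylogenetic tree with leaf set `L`: a finite vertex type `V`,
a root, a parent map (the root is its own parent), every vertex reaches the
root by iterating `parent`, the leaves are exactly the vertices without
children and are in bijection with `L`, and every inner vertex has at least
two children. -/
structure PhyloTree (L : Type) : Type 1 where
  V : Type
  fintypeV : Fintype V
  root : V
  parent : V → V
  leaf : L → V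
  parent_root : parent root = root
  reach : ∀ v : V, ∃ n : ℕ, parent^[n] v = root
  leaf_inj : Function.Injective leaf
  leaf_iff : ∀ v : V, (∀ u : V, parent u = v → u = v) ↔ ∃ x : L, leaf x = v
  phylo : ∀ v : V, (¬ ∃ x : L, leaf x = v) →
      ∃ u u' : V, u ≠ u' ∧ parent u = v ∧ parent u' = v ∧ u ≠ v ∧ u' ≠ v

namespace PhyloTree

variable {L : Type} (T : PhyloTree L)

/-- `v` is an ancestor (or equal) of `w`. -/
def anc (v w : T.V) : Prop := ∃ n : ℕ, T.parent^[n] w = v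

def isLeaf (v : T.V) : Prop := ∃ x : L, T.leaf x = v

/-- The cluster `L(T(v))`: the set of leaves below `v`. -/
def cluster (v : T.V) : Set L := {x : L | T.anc v (T.leaf x)}

/-- The cluster system `H(T)`. -/
def clusters : Set (Set L) := Set.range T.cluster

/-- `w` is the last common ancestor of the leaves `x` and `y`. -/
def isLCA (x y : L) (w : T.V) : Prop :=
  T.anc w (T.leaf x) ∧ T.anc w (T.leaf y) ∧
    ∀ u : T.V, T.anc u (T.leaf x) → T.anc u (T.leaf y) → T.anc u w

/-- `u` is a child of `v`. -/
def childOf (u v : T.V) : Prop := T.parent u = v ∧ u ≠ v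

/-- The edge `{parent u, u}` (encoded by its lower endpoint `u`) is an inner edge. -/
def innerEdge (u : T.V) : Prop := T.parent u ≠ u ∧ ¬ T.isLeaf u

/-- The edge `{parent u, u}` lies on the path from the vertex `w` down to the leaf `y`. -/
def onPath (w : T.V) (y : L) (u : T.V) : Prop :=
  T.anc w u ∧ u ≠ w ∧ T.anc u (T.leaf y)

/-- The vertex-labeled tree `(T,t)` explains `δ`. -/
def ExplainsDelta {M : Type} (t : T.V → M) (δ : L → L → M) : Prop :=
  ∀ x y : L, x ≠ y → ∀ w : T.V, T.isLCA x y w → t w = δ x y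

/-- The edge-labeled tree `(T,λ)` explains `ε`; edge labels are encoded on the
lower endpoint of each edge. -/
def ExplainsEps {N : Type} (lam : T.V → Finset N) (ε : L → L → Finset N) : Prop :=
  ∀ x y : L, x ≠ y → ∀ w : T.V, T.isLCA x y w →
    ∀ k : N, k ∈ ε x y ↔ ∃ u : T.V, T.onPath w y u ∧ k ∈ lam u

/-- The vertex labeling is discriminating: the endpoints of every inner edge
carry distinct labels. -/
def Discriminating {M : Type} (t : T.V → M) : Prop :=
  ∀ u : T.V, T.innerEdge u → t u ≠ t (T.parent u)

/-- Total number of labels over all edges, `Σ_{e ∈ E(T)} |λ(e)|`. -/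
noncomputable def labelSum {N : Type} (lam : T.V → Finset N) : ℕ :=
  letI := T.fintypeV
  letI := Classical.decEq T.V
  ∑ v : T.V, if T.parent v = v then 0 else (lam v).card

/-- Condition (C): every inner vertex has a child joined by an empty-labeled edge. -/
def CondC {N : Type} (lam : T.V → Finset N) : Prop :=
  ∀ v : T.V, ¬ T.isLeaf v → ∃ u : T.V, T.childOf u v ∧ lam u = ∅

/-- Condition (C1): if `t(v) ∈ M₀` then all edges from `v` to its children are empty. -/
def CondC1 {M N : Type} (t : T.V → M) (lam : T.V → Finset N) (M0 : Set M) : Prop :=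
  ∀ v u : T.V, T.childOf u v → t v ∈ M0 → lam u = ∅

/-- Condition (C2): at every vertex, at most one edge to a child is nonempty. -/
def CondC2 {N : Type} (lam : T.V → Finset N) : Prop :=
  ∀ v u u' : T.V, T.childOf u v → T.childOf u' v → lam u ≠ ∅ → lam u' ≠ ∅ → u = u'

/-- `(T1,λ1) ≤ (T2,λ2)`: the edge-labeled tree `(T2,λ2)` refines `(T1,λ1)`. -/
def LeLabeled {N : Type} (T1 : PhyloTree L) (lam1 : T1.V → Finset N)
    (T2 : PhyloTree L) (lam2 : T2.V → Finset N) : Prop :=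
  T1.clusters ⊆ T2.clusters ∧
    ∀ (v1 : T1.V) (v2 : T2.V), T1.parent v1 ≠ v1 → T2.parent v2 ≠ v2 →
      T1.cluster v1 = T2.cluster v2 → lam1 v1 ⊆ lam2 v2

/-- `φ` witnesses that `T'` is obtained from `T` by contracting the inner edge
`{parent u, u}`. -/
def IsContractionMap (T : PhyloTree L) (u : T.V) (T' : PhyloTree L)
    (φ : T.V → T'.V) : Prop :=
  T.innerEdge u ∧ Function.Surjective φ ∧ φ u = φ (T.parent u) ∧
    (∀ a b : T.V, φ a = φ b →
      a = b ∨ (a = u ∧ b = T.parent u) ∨ (b = u ∧ a = T.parent u)) ∧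
    (∀ v : T.V, v ≠ u → T'.parent (φ v) = φ (T.parent v)) ∧
    (∀ x : L, φ (T.leaf x) = T'.leaf x) ∧ φ T.root = T'.root

/-- `T'` is obtained from `T` by contracting the inner edge `{parent u, u}`. -/
def ContractEdge (T : PhyloTree L) (u : T.V) (T' : PhyloTree L) : Prop :=
  ∃ φ : T.V → T'.V, IsContractionMap T u T' φ

/-- Isomorphism of rooted trees on the same leaf set. -/
def Isomorphic (T1 T2 : PhyloTree L) : Prop :=
  ∃ φ : T1.V ≃ T2.V, (∀ v : T1.V, φ (T1.parent v) = T2.parent (φ v)) ∧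
    ∀ x : L, φ (T1.leaf x) = T2.leaf x

def IsSymbolicUltrametric {M : Type} (δ : L → L → M) : Prop :=
  ∃ (T : PhyloTree L) (t : T.V → M), T.ExplainsDelta t δ

def IsFitchMap {N : Type} (ε : L → L → Finset N) : Prop :=
  ∃ (T : PhyloTree L) (lam : T.V → Finset N), T.ExplainsEps lam ε

def TreeLike {M N : Type} (δ : L → L → M) (ε : L → L → Finset N) : Prop :=
  ∃ (T : PhyloTree L) (t : T.V → M) (lam : T.V → Finset N),
    T.ExplainsDelta t δ ∧ T.ExplainsEps lam ε

def MTreeLike {M N : Type} (δ : L → L → M) (ε : L → L → Finset N) (M0 : Set M) : Prop :=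
  ∃ (T : PhyloTree L) (t : T.V → M) (lam : T.V → Finset N),
    T.ExplainsDelta t δ ∧ T.ExplainsEps lam ε ∧ T.CondC lam ∧ T.CondC1 t lam M0

end PhyloTree

/-- A hierarchy on `L`. -/
def IsHierarchy {L : Type} (H : Set (Set L)) : Prop :=
  Set.univ ∈ H ∧ (∀ x : L, {x} ∈ H) ∧
    (∀ A ∈ H, ∀ B ∈ H, A ∩ B = A ∨ A ∩ B = B ∨ A ∩ B = (∅ : Set L)) ∧
    (∅ : Set L) ∉ H

namespace PhyloTree

variable {L : Type} (T : PhyloTree L)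

lemma parent_iterate_fixed {v : T.V} (h : T.parent v = v) (n : ℕ) :
    T.parent^[n] v = v := by
  induction n with
  | zero => rfl
  | succ n ih => rw [Function.iterate_succ_apply', ih, h]

lemma anc_refl (v : T.V) : T.anc v v := ⟨0, rfl⟩

lemma anc_trans {a b c : T.V} (h1 : T.anc a b) (h2 : T.anc b c) : T.anc a c := by
  obtain ⟨n, hn⟩ := h1; obtain ⟨m, hm⟩ := h2
  exact ⟨n + m, by rw [Function.iterate_add_apply, hm, hn]⟩

lemma anc_root (v : T.V) : T.anc T.root v := T.reach v

lemma anc_antisymm {a b : T.V} (h1 : T.anc a b) (h2 : T.anc b a) : a = b := by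
  obtain ⟨n, hn⟩ := h1; obtain ⟨m, hm⟩ := h2
  rcases Nat.eq_zero_or_pos n with h0 | hpos
  · rw [h0] at hn; exact hn.symm
  · have hcyc : T.parent^[m + n] b = b := by
      rw [Function.iterate_add_apply, hn, hm]
    have hk : ∀ k : ℕ, T.parent^[k * (m + n)] b = b := by
      intro k; induction k with
      | zero => simp
      | succ k ih => rw [Nat.succ_mul, Function.iterate_add_apply, hcyc, ih]
    obtain ⟨r, hr⟩ := T.reach b
    have hb : b = T.root := by
      have h2 := hk r
      rw [show r * (m + n) = (r * (m + n) - r) + r by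
            have : r ≤ r * (m + n) := Nat.le_mul_of_pos_right r (by omega)
            omega,
        Function.iterate_add_apply, hr,
        T.parent_iterate_fixed T.parent_root] at h2
      exact h2.symm
    subst hb
    rw [T.parent_iterate_fixed T.parent_root] at hn
    exact hn.symm

lemma anc_total {u v z : T.V} (hu : T.anc u z) (hv : T.anc v z) :
    T.anc u v ∨ T.anc v u := by
  obtain ⟨n, hn⟩ := hu; obtain ⟨m, hm⟩ := hv
  rcases le_or_gt n m with h | h
  · right
    exact ⟨m - n, by rw [← hn, ← Function.iterate_add_apply, Nat.sub_add_cancel h, hm]⟩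
  · left
    exact ⟨n - m, by rw [← hm, ← Function.iterate_add_apply, Nat.sub_add_cancel h.le, hn]⟩

lemma anc_of_parent_fixed {v a : T.V} (h : T.parent v = v) (ha : T.anc a v) : a = v := by
  obtain ⟨n, hn⟩ := ha
  rw [T.parent_iterate_fixed h] at hn; exact hn.symm

lemma parent_eq_self_iff {v : T.V} : T.parent v = v ↔ v = T.root := by
  constructor
  · intro h
    exact (T.anc_of_parent_fixed h (T.anc_root v)).symm ▸ rfl
  · rintro rfl; exact T.parent_root

lemma exists_isLCA (x y : L) : ∃ w : T.V, T.isLCA x y w := by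
  classical
  have hP : ∃ n : ℕ, T.anc (T.parent^[n] (T.leaf x)) (T.leaf y) := by
    obtain ⟨r, hr⟩ := T.reach (T.leaf x)
    exact ⟨r, hr ▸ T.anc_root _⟩
  let n0 := Nat.find hP
  refine ⟨T.parent^[n0] (T.leaf x), ⟨n0, rfl⟩, Nat.find_spec hP, ?_⟩
  intro u hux huy
  obtain ⟨m, hm⟩ := hux
  have hle : n0 ≤ m := by
    by_contra hc; push_neg at hc
    exact Nat.find_min hP hc (hm ▸ huy)
  exact ⟨m - n0, by
    rw [← Function.iterate_add_apply, Nat.sub_add_cancel hle, hm]⟩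

lemma leaf_no_child {x : L} {u : T.V} (h : T.parent u = T.leaf x) : u = T.leaf x :=
  ((T.leaf_iff (T.leaf x)).mpr ⟨x, rfl⟩) u h

lemma iterate_leaf {x : L} : ∀ (n : ℕ) (u : T.V),
    T.parent^[n] u = T.leaf x → u = T.leaf x := by
  intro n
  induction n with
  | zero => intro u h; exact h
  | succ n ih =>
    intro u h
    rw [Function.iterate_succ_apply] at h
    exact T.leaf_no_child (ih _ h)

lemma anc_leaf_eq {x : L} {u : T.V} (h : T.anc (T.leaf x) u) : u = T.leaf x := by
  obtain ⟨n, hn⟩ := h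
  exact T.iterate_leaf n u hn

lemma cluster_leaf (x : L) : T.cluster (T.leaf x) = {x} := by
  ext y
  simp only [cluster, Set.mem_setOf_eq, Set.mem_singleton_iff]
  constructor
  · intro h; exact T.leaf_inj (T.anc_leaf_eq h)
  · rintro rfl; exact T.anc_refl _

lemma child_anc {u v : T.V} (h : T.parent u = v) : T.anc v u := ⟨1, h⟩

lemma child_disjoint {u u' v z : T.V} (hpu : T.parent u = v) (hpu' : T.parent u' = v)
    (hnv : u ≠ v) (hnv' : u' ≠ v) (hne : u ≠ u')
    (hz : T.anc u z) (hz' : T.anc u' z) : False := by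
  have key : ∀ a b : T.V, T.parent a = v → a ≠ v → T.parent b = v → T.anc a b → a = b := by
    rintro a b hpa hna hpb ⟨k, hk⟩
    rcases Nat.eq_zero_or_pos k with h0 | hpos
    · rw [h0] at hk; exact hk.symm
    · exfalso
      apply hna
      apply T.anc_antisymm _ (T.child_anc hpa)
      rw [show k = (k - 1) + 1 by omega, Function.iterate_succ_apply, hpb] at hk
      exact ⟨k - 1, hk⟩
  rcases T.anc_total hz hz' with h | h
  · exact hne (key u u' hpu hnv hpu' h)
  · exact hne (key u' u hpu' hnv' hpu h).symm

lemma exists_leaf_below (v : T.V) : ∃ x : L, T.anc v (T.leaf x) := by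
  classical
  letI := T.fintypeV
  generalize hn : (Finset.univ.filter (fun u => T.anc v u)).card = n
  induction n using Nat.strong_induction_on generalizing v with
  | _ n ih =>
    by_cases hleaf : T.isLeaf v
    · obtain ⟨x, hx⟩ := hleaf
      exact ⟨x, hx ▸ T.anc_refl _⟩
    · obtain ⟨u, u', hne, hpu, hpu', hnv, hnv'⟩ := T.phylo v hleaf
      have hvu : T.anc v u := T.child_anc hpu
      have hss : (Finset.univ.filter (fun w => T.anc u w)) ⊂
          (Finset.univ.filter (fun w => T.anc v w)) := by
        refine Finset.ssubset_iff_of_subset ?_ |>.mpr ?_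
        · intro w hw
          simp only [Finset.mem_filter, Finset.mem_univ, true_and] at hw ⊢
          exact T.anc_trans hvu hw
        · refine ⟨v, ?_, ?_⟩
          · simp [T.anc_refl]
          · simp only [Finset.mem_filter, Finset.mem_univ, true_and]
            intro hcon
            exact hnv (T.anc_antisymm hcon hvu)
      obtain ⟨x, hx⟩ := ih _ (hn ▸ Finset.card_lt_card hss) u rfl
      exact ⟨x, T.anc_trans hvu hx⟩

lemma cluster_nonempty (v : T.V) : (T.cluster v).Nonempty := by
  obtain ⟨x, hx⟩ := T.exists_leaf_below v
  exact ⟨x, hx⟩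

lemma cluster_mono {u v : T.V} (h : T.anc v u) : T.cluster u ⊆ T.cluster v :=
  fun _ hx => T.anc_trans h hx

lemma cluster_inj {u v : T.V} (h : T.cluster u = T.cluster v) : u = v := by
  classical
  obtain ⟨x, hx⟩ := T.cluster_nonempty u
  have hx' : x ∈ T.cluster v := h ▸ hx
  have key : ∀ a b : T.V, T.cluster a = T.cluster b → T.anc b a → a = b := by
    rintro a b hab ⟨n, hn⟩
    by_contra hne
    have hP : ∃ m : ℕ, T.parent^[m] a = b := ⟨n, hn⟩
    set m0 := Nat.find hP with hm0
    have hspec : T.parent^[m0] a = b := Nat.find_spec hP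
    have hm0pos : 0 < m0 := by
      rcases Nat.eq_zero_or_pos m0 with h0 | hp
      · exfalso; apply hne; rw [← hspec, h0]; rfl
      · exact hp
    set w := T.parent^[m0 - 1] a with hw
    have hpw : T.parent w = b := by
      have h2 : T.parent^[(m0-1)+1] a = T.parent (T.parent^[m0-1] a) :=
        Function.iterate_succ_apply' _ _ _
      rw [hw, ← h2, show (m0-1)+1 = m0 by omega, hspec]
    have hwb : w ≠ b := by
      intro hcon
      have hlt : (m0 - 1) < m0 := by omega
      exact absurd (Nat.find_min hP hlt (hw ▸ hcon)) (by simp)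
    have hbleaf : ¬ T.isLeaf b := by
      rintro ⟨z, hz⟩
      subst hz
      exact hwb (T.leaf_no_child hpw)
    obtain ⟨c, c', hcc, hpc, hpc', hcv, hcv'⟩ := T.phylo b hbleaf
    have haw : T.anc w a := ⟨m0 - 1, rfl⟩
    have main : ∀ d : T.V, T.parent d = b → d ≠ b → d ≠ w → False := by
      intro d hpd hdb hdw
      obtain ⟨y, hy⟩ := T.exists_leaf_below d
      have hyb : y ∈ T.cluster b := T.anc_trans (T.child_anc hpd) hy
      have hya : y ∈ T.cluster a := hab ▸ hyb
      have hyw : T.anc w (T.leaf y) := T.anc_trans haw hya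
      exact T.child_disjoint hpd hpw hdb hwb hdw hy hyw
    by_cases hcw : c = w
    · exact main c' hpc' hcv' (by rw [← hcw]; exact fun hc => hcc hc.symm)
    · exact main c hpc hcv hcw
  rcases T.anc_total hx hx' with hc | hc
  · exact (key v u h.symm hc).symm
  · exact key u v h hc

lemma cluster_subset_iff {u v : T.V} : T.cluster u ⊆ T.cluster v ↔ T.anc v u := by
  constructor
  · intro h
    obtain ⟨x, hx⟩ := T.cluster_nonempty u
    rcases T.anc_total hx (h hx) with hc | hc
    · have heq : T.cluster u = T.cluster v :=
        Set.Subset.antisymm h (T.cluster_mono hc)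
      rw [T.cluster_inj heq]; exact T.anc_refl v
    · exact hc
  · exact T.cluster_mono

lemma cluster_root : T.cluster T.root = Set.univ := by
  ext x; simp only [cluster, Set.mem_setOf_eq, Set.mem_univ, iff_true]
  exact T.anc_root _

end PhyloTree
/-- Let `ε` be a Fitch map with unique least-resolved tree
`(T_ε,λ_ε)`.  A tree `T` admits an edge labeling `λ` such that `(T,λ)` explains
`ε` iff `T` refines `T_ε`. -/
theorem statement7 {L N : Type} (ε : L → L → Finset N) (Tε : PhyloTree L)
    (lamε : Tε.V → Finset N) (hexp : Tε.ExplainsEps lamε ε)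
    (hleast : ∀ (T : PhyloTree L) (lam : T.V → Finset N),
      T.ExplainsEps lam ε → PhyloTree.LeLabeled Tε lamε T lam) :
    ∀ T : PhyloTree L,
      (∃ lam : T.V → Finset N, T.ExplainsEps lam ε) ↔ Tε.clusters ⊆ T.clusters := by
  intro T
  constructor
  · rintro ⟨lam, hl⟩
    exact (hleast T lam hl).1
  · intro hsub
    classical
    letI := Tε.fintypeV
    have hex : ∀ vε : Tε.V, ∃ v : T.V, T.cluster v = Tε.cluster vε := by
      intro vε
      obtain ⟨v, hv⟩ := hsub ⟨vε, rfl⟩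
      exact ⟨v, hv⟩
    choose φ hφ using hex
    have hancIff : ∀ a b : Tε.V, Tε.anc a b ↔ T.anc (φ a) (φ b) := by
      intro a b
      rw [← Tε.cluster_subset_iff, ← T.cluster_subset_iff, hφ, hφ]
    have hφleaf : ∀ x : L, φ (Tε.leaf x) = T.leaf x := by
      intro x
      apply T.cluster_inj
      rw [hφ, Tε.cluster_leaf, T.cluster_leaf]
    set lam : T.V → Finset N := fun v =>
      Finset.univ.biUnion (fun vε : Tε.V =>
        if φ vε = v ∧ Tε.parent vε ≠ vε then lamε vε else ∅) with hlamdef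
    have hlam : ∀ (v : T.V) (k : N), k ∈ lam v ↔
        ∃ vε : Tε.V, φ vε = v ∧ Tε.parent vε ≠ vε ∧ k ∈ lamε vε := by
      intro v k
      rw [hlamdef]
      simp only [Finset.mem_biUnion, Finset.mem_univ, true_and]
      constructor
      · rintro ⟨vε, hvε⟩
        split_ifs at hvε with hc
        · exact ⟨vε, hc.1, hc.2, hvε⟩
        · simp at hvε
      · rintro ⟨vε, h1, h2, h3⟩
        exact ⟨vε, by rw [if_pos ⟨h1, h2⟩]; exact h3⟩
    refine ⟨lam, ?_⟩
    intro x y hxy w hw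
    obtain ⟨wε, hwε⟩ := Tε.exists_isLCA x y
    have hwx : T.anc (φ wε) (T.leaf x) := by
      rw [← hφleaf x, ← hancIff]; exact hwε.1
    have hwy : T.anc (φ wε) (T.leaf y) := by
      rw [← hφleaf y, ← hancIff]; exact hwε.2.1
    have hwεw : T.anc (φ wε) w := hw.2.2 _ hwx hwy
    have claim : ∀ vε : Tε.V, Tε.onPath wε y vε ↔ T.onPath w y (φ vε) := by
      intro vε
      constructor
      · rintro ⟨h1, h2, h3⟩
        have hu_y : T.anc (φ vε) (T.leaf y) := by
          rw [← hφleaf y, ← hancIff]; exact h3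
        have hnotup : ¬ T.anc (φ vε) w := by
          intro hup
          have hvx : Tε.anc vε (Tε.leaf x) := by
            rw [hancIff, hφleaf]
            exact T.anc_trans hup hw.1
          exact h2 (Tε.anc_antisymm (hwε.2.2 _ hvx h3) h1)
        have hwu : T.anc w (φ vε) := (T.anc_total hu_y hw.2.1).resolve_left hnotup
        exact ⟨hwu, fun he => hnotup (by rw [he]; exact T.anc_refl w), hu_y⟩
      · rintro ⟨h1, h2, h3⟩
        have hvy : Tε.anc vε (Tε.leaf y) := by
          rw [hancIff, hφleaf]; exact h3
        have hwv : Tε.anc wε vε := by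
          rw [hancIff]
          exact T.anc_trans hwεw h1
        refine ⟨hwv, ?_, hvy⟩
        rintro rfl
        exact h2 (T.anc_antisymm h1 hwεw).symm
    intro k
    rw [hexp x y hxy wε hwε k]
    constructor
    · rintro ⟨uε, hpath, hk⟩
      refine ⟨φ uε, (claim uε).mp hpath, ?_⟩
      rw [hlam]
      refine ⟨uε, rfl, ?_, hk⟩
      intro hfix
      exact hpath.2.1 (Tε.anc_of_parent_fixed hfix hpath.1).symm
    · rintro ⟨u, hpath, hk⟩
      rw [hlam] at hk
      obtain ⟨vε, hfv, hne, hkv⟩ := hk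
      refine ⟨vε, (claim vε).mpr (by rw [hfv]; exact hpath), hkv⟩
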